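/- arXiv:2403.04448 — 2 statements merged into one kernel-verified Lean document; each statement's English description precedes it below -/
import Mathlib

section
/- With notation as in the joint array measurement update, assume S_e is invertible and define K = P̄_{xz}·S_e^{-1}. Then K equals the Kalman gain P_{xz} R_e^{-1} where P_{xz} = X̄ Z̄ᵀ and R_e = Z̄ Z̄ᵀ + R, and moreover S_P S_Pᵀ = X̄ X̄ᵀ − K R_e Kᵀ, i.e. S_P is a square root of the posterior covariance P_{k|k} = P_{k|k-1} − K R_e Kᵀ with P_{k|k-1} = X̄ X̄ᵀ. -/
open Matrix

/-! Since `Θ` is orthogonal, the pre- and post-array have the same Gram matrix `A Aᵀ = B Bᵀ`.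
Comparing blocks gives `Rₑ = Sₑ Sₑᵀ`, `X̄ Z̄ᵀ = P̄ₓᵤ Sₑᵀ` and `X̄ X̄ᵀ = P̄ₓᵤ P̄ₓᵤᵀ + S_P S_Pᵀ`;
with `K = P̄ₓᵤ Sₑ⁻¹` the first two give `K = X̄ Z̄ᵀ Rₑ⁻¹` and `K Rₑ Kᵀ = P̄ₓᵤ P̄ₓᵤᵀ`,
so the third is the covariance update. -/

namespace Matrix

variable {R : Type*} [CommRing R] {l m n o : Type*} [Fintype m] [Fintype n]

theorem mul_transpose_self_eq_of_mul_eq [DecidableEq m] {A : Matrix l m R} {Θ : Matrix m n R}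
    {B : Matrix l n R} (hΘ : Θ * Θᵀ = 1) (h : A * Θ = B) : A * Aᵀ = B * Bᵀ := by
  calc A * Aᵀ = A * (Θ * Θᵀ) * Aᵀ := by rw [hΘ, Matrix.mul_one]
    _ = (A * Θ) * (A * Θ)ᵀ := by simp only [transpose_mul, Matrix.mul_assoc]
    _ = B * Bᵀ := by rw [h]

theorem fromBlocks_mul_transpose_self {p : Type*} (A : Matrix l m R) (B : Matrix l n R)
    (C : Matrix p m R) (D : Matrix p n R) :
    fromBlocks A B C D * (fromBlocks A B C D)ᵀ =
      fromBlocks (A * Aᵀ + B * Bᵀ) (A * Cᵀ + B * Dᵀ) (C * Aᵀ + D * Bᵀ) (C * Cᵀ + D * Dᵀ) := by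
  rw [fromBlocks_transpose, fromBlocks_multiply]

variable [DecidableEq m]

theorem mul_nonsing_inv_eq_mul_transpose_mul_inv {P : Matrix o m R} {S : Matrix m m R}
    (hS : IsUnit S.det) : P * S⁻¹ = (P * Sᵀ) * (S * Sᵀ)⁻¹ := by
  have hST : IsUnit Sᵀ.det := by rwa [det_transpose]
  rw [mul_inv_rev, Matrix.mul_assoc, ← Matrix.mul_assoc Sᵀ, mul_nonsing_inv _ hST,
    Matrix.one_mul]

theorem mul_nonsing_inv_mul_mul_transpose {P : Matrix o m R} {S : Matrix m m R}
    (hS : IsUnit S.det) : P * S⁻¹ * (S * Sᵀ) * (P * S⁻¹)ᵀ = P * Pᵀ := by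
  have hST : IsUnit Sᵀ.det := by rwa [det_transpose]
  calc P * S⁻¹ * (S * Sᵀ) * (P * S⁻¹)ᵀ = P * ((S⁻¹ * S) * (Sᵀ * Sᵀ⁻¹)) * Pᵀ := by
        simp only [transpose_mul, transpose_nonsing_inv, Matrix.mul_assoc]
    _ = P * Pᵀ := by
        rw [nonsing_inv_mul _ hS, mul_nonsing_inv _ hST, Matrix.one_mul, Matrix.mul_one]

end Matrix

theorem stmt_8_general (n m : ℕ)
    (Zbar : Matrix (Fin m) (Fin n) ℝ) (Xbar : Matrix (Fin n) (Fin n) ℝ)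
    (Rsqrt : Matrix (Fin m) (Fin m) ℝ)
    (Se : Matrix (Fin m) (Fin m) ℝ) (Pxzbar : Matrix (Fin n) (Fin m) ℝ)
    (SP : Matrix (Fin n) (Fin n) ℝ)
    (Θ : Matrix (Fin n ⊕ Fin m) (Fin m ⊕ Fin n) ℝ)
    (hΘ : Θ * Θᵀ = 1)
    (hpost : fromBlocks Zbar Rsqrt Xbar 0 * Θ = fromBlocks Se 0 Pxzbar SP)
    (hSe : IsUnit Se.det)
    (K : Matrix (Fin n) (Fin m) ℝ) (hK : K = Pxzbar * Se⁻¹) :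
    K = (Xbar * Zbarᵀ) * (Zbar * Zbarᵀ + Rsqrt * Rsqrtᵀ)⁻¹ ∧
    SP * SPᵀ = Xbar * Xbarᵀ - K * (Zbar * Zbarᵀ + Rsqrt * Rsqrtᵀ) * Kᵀ := by
  have gram := mul_transpose_self_eq_of_mul_eq hΘ hpost
  rw [fromBlocks_mul_transpose_self, fromBlocks_mul_transpose_self, fromBlocks_inj] at gram
  obtain ⟨hRe, -, hPxz, hPpost⟩ := gram
  simp only [Matrix.mul_zero, Matrix.zero_mul, transpose_zero, add_zero] at hRe hPxz hPpost
  rw [hRe, hPxz, hK]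
  refine ⟨mul_nonsing_inv_eq_mul_transpose_mul_inv hSe, ?_⟩
  rw [mul_nonsing_inv_mul_mul_transpose hSe, hPpost]
  abel

/-- With the joint array measurement update `[[Z̄, R^{1/2}],[X̄, 0]]·Θ = [[Sₑ, 0],[P̄ₓᵤ, S_P]]`,
`Θ` orthogonal, `R = R^{1/2}(R^{1/2})ᵀ`, and `Sₑ` invertible, the matrix
`K = P̄ₓᵤ·Sₑ⁻¹` equals the Kalman gain `Pₓᵤ Rₑ⁻¹` with `Pₓᵤ = X̄ Z̄ᵀ`, `Rₑ = Z̄ Z̄ᵀ + R`;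
moreover `S_P S_Pᵀ = X̄ X̄ᵀ − K Rₑ Kᵀ`. -/
theorem stmt_8 (n m : ℕ)
    (Zbar : Matrix (Fin m) (Fin n) ℝ) (Xbar : Matrix (Fin n) (Fin n) ℝ)
    (Rsqrt : Matrix (Fin m) (Fin m) ℝ)
    (Se : Matrix (Fin m) (Fin m) ℝ) (Pxzbar : Matrix (Fin n) (Fin m) ℝ)
    (SP : Matrix (Fin n) (Fin n) ℝ)
    (Θ : Matrix (Fin n ⊕ Fin m) (Fin m ⊕ Fin n) ℝ)
    (hΘ : Θ * Θᵀ = 1)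
    (hpost : fromBlocks Zbar Rsqrt Xbar 0 * Θ = fromBlocks Se 0 Pxzbar SP)
    (hRpd : (Rsqrt * Rsqrtᵀ).PosDef)
    (hSe : IsUnit Se.det)
    (K : Matrix (Fin n) (Fin m) ℝ) (hK : K = Pxzbar * Se⁻¹) :
    K = (Xbar * Zbarᵀ) * (Zbar * Zbarᵀ + Rsqrt * Rsqrtᵀ)⁻¹ ∧
    SP * SPᵀ = Xbar * Xbarᵀ - K * (Zbar * Zbarᵀ + Rsqrt * Rsqrtᵀ) * Kᵀ :=
  stmt_8_general n m Zbar Xbar Rsqrt Se Pxzbar SP Θ hΘ hpost hSe K hK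
end

section
/- Let P ∈ ℝ^{n×n} be symmetric positive semidefinite and R_e ∈ ℝ^{m×m} symmetric positive definite, P_{xz} ∈ ℝ^{n×m}, K = P_{xz}R_e^{-1}. If P − K R_e Kᵀ arises as P = X̄X̄ᵀ with P_{xz} = X̄ Z̄ᵀ and R_e = Z̄Z̄ᵀ + R (R symmetric positive semidefinite), then P − K R_e Kᵀ is positive semidefinite. -/
/-!
With `K = Pₓz Rₑ⁻¹` one has `K Rₑ Kᵀ = Pₓz Rₑ⁻¹ Pₓzᵀ`, so `P - K Rₑ Kᵀ` is the Schur complement of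
`Rₑ` in the joint block matrix `[[P, Pₓz], [Pₓzᵀ, Rₑ]]`. That block matrix is the Gram matrix of
the stacked samples `[X̄; Z̄]` plus `diag(0, R)`, hence positive semidefinite, and the Schur
complement of a positive definite block in a positive semidefinite matrix is positive semidefinite.
-/

open Matrix

namespace Matrix

variable {𝕜 k n m : Type*}

theorem mul_inv_mul_mul_conjTranspose_mul_inv [CommRing 𝕜] [StarRing 𝕜] [Fintype m]
    [DecidableEq m] {S : Matrix m m 𝕜} (hS : S.IsHermitian) (hdet : IsUnit S.det)
    (B : Matrix n m 𝕜) : B * S⁻¹ * S * (B * S⁻¹)ᴴ = B * S⁻¹ * Bᴴ := by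
  rw [conjTranspose_mul, conjTranspose_nonsing_inv, hS.eq, Matrix.mul_assoc B,
    nonsing_inv_mul _ hdet, Matrix.mul_one, Matrix.mul_assoc]

theorem fromBlocks_eq_fromRows_mul_conjTranspose_add [Ring 𝕜] [StarRing 𝕜] [Fintype k]
    (X : Matrix n k 𝕜) (Z : Matrix m k 𝕜) (R : Matrix m m 𝕜) :
    fromBlocks (X * Xᴴ) (X * Zᴴ) (X * Zᴴ)ᴴ (Z * Zᴴ + R) =
      fromRows X Z * (fromRows X Z)ᴴ + fromBlocks 0 0 0 R := by
  rw [conjTranspose_fromRows_eq_fromCols_conjTranspose, fromRows_mul_fromCols, fromBlocks_add,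
    conjTranspose_mul, conjTranspose_conjTranspose]
  simp

theorem posSemidef_fromBlocks_zero_zero_zero [Ring 𝕜] [PartialOrder 𝕜] [StarRing 𝕜]
    [Fintype n] [Fintype m] [DecidableEq m] {R : Matrix m m 𝕜} (hR : R.PosSemidef) :
    (fromBlocks 0 0 0 R : Matrix (n ⊕ m) (n ⊕ m) 𝕜).PosSemidef := by
  simpa [conjTranspose_fromRows_eq_fromCols_conjTranspose, fromRows_mul, mul_fromCols,
    ← fromCols_fromRows_eq_fromBlocks] using
    hR.mul_mul_conjTranspose_same (fromRows (0 : Matrix n m 𝕜) (1 : Matrix m m 𝕜))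

theorem posSemidef_sub_mul_inv_mul_conjTranspose [Field 𝕜] [PartialOrder 𝕜] [StarRing 𝕜]
    [StarOrderedRing 𝕜] [Fintype k] [Fintype n] [Fintype m] [DecidableEq m] (X : Matrix n k 𝕜)
    (Z : Matrix m k 𝕜) {R : Matrix m m 𝕜} (hR : R.PosSemidef) (hRe : (Z * Zᴴ + R).PosDef) :
    (X * Xᴴ - X * Zᴴ * (Z * Zᴴ + R)⁻¹ * (X * Zᴴ)ᴴ).PosSemidef := by
  have := hRe.isUnit.invertible
  rw [← hRe.fromBlocks₂₂, fromBlocks_eq_fromRows_mul_conjTranspose_add]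
  exact (posSemidef_self_mul_conjTranspose _).add (posSemidef_fromBlocks_zero_zero_zero hR)

end Matrix

/-- If `P = X̄ X̄ᵀ`, `Pₓᵤ = X̄ Z̄ᵀ`, `Rₑ = Z̄ Z̄ᵀ + R` with `R` symmetric positive
semidefinite and `Rₑ` symmetric positive definite, and `K = Pₓᵤ Rₑ⁻¹`, then
`P − K Rₑ Kᵀ` is positive semidefinite. -/
theorem stmt_16 (n m : ℕ)
    (Xbar : Matrix (Fin n) (Fin n) ℝ) (Zbar : Matrix (Fin m) (Fin n) ℝ)
    (R : Matrix (Fin m) (Fin m) ℝ) (hR : R.PosSemidef)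
    (Re : Matrix (Fin m) (Fin m) ℝ) (hRe : Re = Zbar * Zbarᵀ + R)
    (hRepd : Re.PosDef)
    (P : Matrix (Fin n) (Fin n) ℝ) (hP : P = Xbar * Xbarᵀ)
    (Pxz : Matrix (Fin n) (Fin m) ℝ) (hPxz : Pxz = Xbar * Zbarᵀ)
    (K : Matrix (Fin n) (Fin m) ℝ) (hK : K = Pxz * Re⁻¹) :
    (P - K * Re * Kᵀ).PosSemidef := by
  simp only [← conjTranspose_eq_transpose_of_trivial] at hRe hP hPxz ⊢
  rw [hK, mul_inv_mul_mul_conjTranspose_mul_inv hRepd.isHermitian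
    ((isUnit_iff_isUnit_det _).mp hRepd.isUnit), hP, hPxz]
  subst hRe
  exact posSemidef_sub_mul_inv_mul_conjTranspose Xbar Zbar hR hRepd
end
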